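/- arXiv:2411.13884 — 2 statements merged into one kernel-verified Lean document; each statement's English description precedes it below -/
import Mathlib

section
/- Cost equivalence for controlled-predictor policies: for every finite horizon N ≥ 1, every initial pmf π_0 and every controlled-predictor policy, the expected accumulated cost satisfies E[Σ_{k=0}^{N-1} c(x_k, u_k)] = E[Σ_{k=0}^{N-1} c̃(π_k, Q_k, η_k)], where u_k = η_k(Q_k, q_k), the expectations are with respect to the trajectory law, π_k is the recursively defined predictor, and c̃(π,Q,η) := Σ_{x∈𝕏} π(x) c(x, η(Q, Q(x))). -/
open Finset

noncomputable section

variable {X U M : Type}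

/-- `π` is a probability mass function on the finite set `X`. -/
def IsPmf [Fintype X] (π : X → ℝ) : Prop :=
  (∀ x, 0 ≤ π x) ∧ ∑ x, π x = 1

/-- Mass that `π` assigns to the cell `Q⁻¹(q)`. -/
def mass [Fintype X] [DecidableEq M] (π : X → ℝ) (Q : X → M) (q : M) : ℝ :=
  ∑ x ∈ Finset.univ.filter (fun x => Q x = q), π x

/-- One-step predictor (Bayesian) update `F(π,Q,η,q)`. -/
def Fupd [Fintype X] [DecidableEq M] (P : X → U → X → ℝ)
    (π : X → ℝ) (Q : X → M) (η : (X → M) → M → U) (q : M) : X → ℝ :=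
  fun x' => (mass π Q q)⁻¹ *
    ∑ x ∈ Finset.univ.filter (fun x => Q x = q), P x (η Q q) x' * π x

/-- Predictor process along a (chronological) list of channel outputs,
under the controlled-predictor policy `(γe, γc)`. -/
def predSeq [Fintype X] [DecidableEq M] (P : X → U → X → ℝ)
    (γe : (X → ℝ) → (X → M)) (γc : (X → ℝ) → ((X → M) → M → U)) :
    (X → ℝ) → List M → (X → ℝ)
  | π, [] => π
  | π, q :: qs => predSeq P γe γc (Fupd P π (γe π) (γc π) q) qs

/-- The predictor `π_s` given output history `qs` (only the first `s` outputs are used). -/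
def predAt [Fintype X] [DecidableEq M] (P : X → U → X → ℝ)
    (γe : (X → ℝ) → (X → M)) (γc : (X → ℝ) → ((X → M) → M → U))
    (π0 : X → ℝ) {n : ℕ} (qs : Fin n → M) (s : ℕ) : X → ℝ :=
  predSeq P γe γc π0 ((List.ofFn qs).take s)

/-- Trajectory law of `(x_{[0,n-1]}, q_{[0,n-1]})` under the controlled-predictor
policy `(γe, γc)` with initial pmf `π0`:
`π0(x_0) ∏_s 1{q_s = Q_s(x_s)} ∏_s P(x_{s+1} | x_s, η_s(Q_s, q_s))`. -/
def law [Fintype X] [Fintype M] [DecidableEq M] (P : X → U → X → ℝ)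
    (γe : (X → ℝ) → (X → M)) (γc : (X → ℝ) → ((X → M) → M → U))
    (π0 : X → ℝ) (n : ℕ) (xs : Fin n → X) (qs : Fin n → M) : ℝ :=
  ∏ s : Fin n,
    ((if (s : ℕ) = 0 then π0 (xs s)
      else
        P (xs ⟨(s : ℕ) - 1, lt_of_le_of_lt (Nat.sub_le _ _) s.isLt⟩)
          (γc (predAt P γe γc π0 qs ((s : ℕ) - 1))
            (γe (predAt P γe γc π0 qs ((s : ℕ) - 1)))
            (qs ⟨(s : ℕ) - 1, lt_of_le_of_lt (Nat.sub_le _ _) s.isLt⟩))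
          (xs s))
      * (if qs s = γe (predAt P γe γc π0 qs (s : ℕ)) (xs s) then 1 else 0))

/-- Probability of the output history `qs` under the trajectory law. -/
def outProb [Fintype X] [Fintype M] [DecidableEq M] (P : X → U → X → ℝ)
    (γe : (X → ℝ) → (X → M)) (γc : (X → ℝ) → ((X → M) → M → U))
    (π0 : X → ℝ) (n : ℕ) (qs : Fin n → M) : ℝ :=
  ∑ xs : Fin n → X, law P γe γc π0 n xs qs

/-- The equivalent per-stage cost `c̃(π,Q,η) := Σ_x π(x) c(x, η(Q, Q(x)))`. -/
def ctilde [Fintype X] (c : X → U → ℝ) (π : X → ℝ) (Q : X → M)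
    (η : (X → M) → M → U) : ℝ :=
  ∑ x, π x * c x (η Q (Q x))

/-! The predictor is the conditional law of the current state given the past outputs: summing the
trajectory law over the past states, the joint probability of `q_{[0,n-1]}` and `x_n` is
`outProb(q_{[0,n-1]}) · π_n(x_n)`, which follows by induction from the Bayes form of `Fupd`.
Hence the expected cost of stage `n` equals the expectation of `c̃(π_n, Q_n, η_n)`, and the
theorem follows by induction on the horizon, the law at horizon `n + 1` marginalising to the law
at horizon `n`. -/

theorem sum_pi_fin_succ {α β : Type*} [Fintype α] [AddCommMonoid β] {n : ℕ}
    (f : (Fin (n + 1) → α) → β) :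
    ∑ g : Fin (n + 1) → α, f g = ∑ x : α, ∑ xs : Fin n → α, f (Fin.snoc xs x) := by
  rw [← (Fin.snocEquiv fun _ ↦ α).sum_comp f, Fintype.sum_prod_type]
  rfl

section Predictor

variable [Fintype X] [DecidableEq M] {P : X → U → X → ℝ} {γe : (X → ℝ) → (X → M)}
  {γc : (X → ℝ) → ((X → M) → M → U)}

theorem predSeq_append (π : X → ℝ) (l₁ l₂ : List M) :
    predSeq P γe γc π (l₁ ++ l₂) = predSeq P γe γc (predSeq P γe γc π l₁) l₂ := by
  induction l₁ generalizing π with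
  | nil => rfl
  | cons q l ih => exact ih _

theorem predAt_snoc_of_le (π0 : X → ℝ) {n : ℕ} (qs : Fin n → M) (q : M) {s : ℕ}
    (hs : s ≤ n) : predAt P γe γc π0 (Fin.snoc qs q) s = predAt P γe γc π0 qs s := by
  simp only [predAt, List.ofFn_succ', Fin.snoc_castSucc, Fin.snoc_last, List.concat_eq_append]
  rw [List.take_append_of_le_length (by simpa using hs)]

theorem predAt_snoc_succ (π0 : X → ℝ) {n : ℕ} (qs : Fin n → M) (q : M) :
    predAt P γe γc π0 (Fin.snoc qs q) (n + 1) =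
      Fupd P (predAt P γe γc π0 qs n) (γe (predAt P γe γc π0 qs n))
        (γc (predAt P γe γc π0 qs n)) q := by
  simp only [predAt, List.ofFn_succ', Fin.snoc_castSucc, Fin.snoc_last, List.concat_eq_append]
  rw [List.take_of_length_le (by simp), predSeq_append, List.take_of_length_le (by simp)]
  rfl

theorem Fupd_nonneg (hP : ∀ x u x', 0 ≤ P x u x') {π : X → ℝ} (hπ : ∀ x, 0 ≤ π x)
    (Q : X → M) (η : (X → M) → M → U) (q : M) (x' : X) : 0 ≤ Fupd P π Q η q x' :=
  mul_nonneg (inv_nonneg.2 (sum_nonneg fun _ _ ↦ hπ _))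
    (sum_nonneg fun _ _ ↦ mul_nonneg (hP _ _ _) (hπ _))

theorem predSeq_nonneg (hP : ∀ x u x', 0 ≤ P x u x') {π : X → ℝ} (hπ : ∀ x, 0 ≤ π x)
    (l : List M) (x : X) : 0 ≤ predSeq P γe γc π l x := by
  induction l generalizing π with
  | nil => exact hπ x
  | cons q l ih => exact ih (Fupd_nonneg hP hπ _ _ _)

theorem mass_mul_Fupd {π : X → ℝ} (hπ : ∀ x, 0 ≤ π x) (Q : X → M) (η : (X → M) → M → U)
    (q : M) (x' : X) :
    mass π Q q * Fupd P π Q η q x' = ∑ x ∈ univ.filter (Q · = q), π x * P x (η Q q) x' := by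
  -- On a null cell `Fupd` is junk (`0⁻¹ = 0`); nonnegativity makes the right side vanish too.
  by_cases h : mass π Q q = 0
  · have hcell : ∀ x ∈ univ.filter (Q · = q), π x = 0 :=
      (sum_eq_zero_iff_of_nonneg fun y _ ↦ hπ y).1 h
    rw [h, zero_mul, sum_eq_zero fun x hx ↦ by rw [hcell x hx, zero_mul]]
  · rw [Fupd, ← mul_assoc, mul_inv_cancel₀ h, one_mul]
    simp only [mul_comm]

end Predictor

section Trajectory

variable [Fintype X] [DecidableEq M] (P : X → U → X → ℝ) (γe : (X → ℝ) → (X → M))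
  (γc : (X → ℝ) → ((X → M) → M → U)) (π0 : X → ℝ)

local notation "𝛑" => predAt P γe γc π0

/-- The factor of `law` contributed by the state appended to `xs`: the initial pmf if `xs` is
empty, and otherwise the transition out of its last state. -/
def stageKernel : {n : ℕ} → (Fin n → X) → (Fin n → M) → X → ℝ
  | 0, _, _ => π0
  | n + 1, xs, qs => P (xs (Fin.last n)) (γc (𝛑 qs n) (γe (𝛑 qs n)) (qs (Fin.last n)))

theorem sum_stageKernel (hP : ∀ x u, IsPmf (P x u)) (hπ0 : IsPmf π0) {n : ℕ}
    (xs : Fin n → X) (qs : Fin n → M) : ∑ x, stageKernel P γe γc π0 xs qs x = 1 := by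
  cases n with
  | zero => exact hπ0.2
  | succ n => exact (hP _ _).2

variable [Fintype M]

theorem law_snoc {n : ℕ} (xs : Fin n → X) (qs : Fin n → M) (x : X) (q : M) :
    law P γe γc π0 (n + 1) (Fin.snoc xs x) (Fin.snoc qs q) =
      law P γe γc π0 n xs qs * stageKernel P γe γc π0 xs qs x *
        (if q = γe (𝛑 qs n) x then 1 else 0) := by
  rw [law, Fin.prod_univ_castSucc, mul_assoc]
  congr 1
  · refine prod_congr rfl fun s _ ↦ ?_
    simp only [Fin.val_castSucc, Fin.snoc_castSucc, predAt_snoc_of_le π0 qs q s.isLt.le,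
      predAt_snoc_of_le π0 qs q (by omega : (s : ℕ) - 1 ≤ n)]
    split_ifs <;> simp_all [Fin.snoc, show (s : ℕ) - 1 < n by omega]
  · simp only [Fin.val_last, Fin.snoc_last, predAt_snoc_of_le π0 qs q le_rfl]
    cases n with
    | zero => simp [stageKernel]
    | succ m =>
      simp [stageKernel, Fin.snoc, Fin.last, predAt_snoc_of_le π0 qs q (Nat.le_succ m)]

theorem sum_law_snoc_mul {n : ℕ} (qs : Fin n → M) (q : M) (f : (Fin (n + 1) → X) → ℝ) :
    ∑ xs', law P γe γc π0 (n + 1) xs' (Fin.snoc qs q) * f xs' =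
      ∑ x ∈ univ.filter (γe (𝛑 qs n) · = q), ∑ xs,
        law P γe γc π0 n xs qs * stageKernel P γe γc π0 xs qs x * f (Fin.snoc xs x) := by
  rw [sum_pi_fin_succ, sum_filter]
  refine sum_congr rfl fun x _ ↦ ?_
  split_ifs with hx
  · simp only [law_snoc, hx, if_true, mul_one]
  · simp only [law_snoc, Ne.symm hx, if_false, mul_zero, zero_mul, sum_const_zero]

/-- The joint probability of the outputs `q_{[0,n-1]}` and of the next state `x_n = x`. -/
def outStateProb (n : ℕ) (qs : Fin n → M) (x : X) : ℝ :=
  ∑ xs, law P γe γc π0 n xs qs * stageKernel P γe γc π0 xs qs x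

theorem outProb_snoc {n : ℕ} (qs : Fin n → M) (q : M) :
    outProb P γe γc π0 (n + 1) (Fin.snoc qs q) =
      mass (outStateProb P γe γc π0 n qs) (γe (𝛑 qs n)) q := by
  simpa [outProb, mass, outStateProb] using sum_law_snoc_mul P γe γc π0 qs q fun _ ↦ 1

theorem outStateProb_snoc {n : ℕ} (qs : Fin n → M) (q : M) (x' : X) :
    outStateProb P γe γc π0 (n + 1) (Fin.snoc qs q) x' =
      ∑ x ∈ univ.filter (γe (𝛑 qs n) · = q),
        outStateProb P γe γc π0 n qs x * P x (γc (𝛑 qs n) (γe (𝛑 qs n)) q) x' := by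
  rw [outStateProb, sum_law_snoc_mul]
  refine sum_congr rfl fun x _ ↦ ?_
  simp only [stageKernel, Fin.snoc_last, predAt_snoc_of_le π0 qs q le_rfl, outStateProb,
    sum_mul]

theorem outStateProb_eq_outProb_mul_predAt (hP : ∀ x u x', 0 ≤ P x u x')
    (hπ0 : ∀ x, 0 ≤ π0 x) (n : ℕ) (qs : Fin n → M) (x : X) :
    outStateProb P γe γc π0 n qs x = outProb P γe γc π0 n qs * 𝛑 qs n x := by
  induction n generalizing x with
  | zero => simp [outStateProb, outProb, law, stageKernel, predAt, predSeq]
  | succ n ih =>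
    induction qs using Fin.snocCases with
    | snoc qs q =>
      have hπ : ∀ x, 0 ≤ 𝛑 qs n x := predSeq_nonneg hP hπ0 _
      have hmass : mass (outStateProb P γe γc π0 n qs) (γe (𝛑 qs n)) q =
          outProb P γe γc π0 n qs * mass (𝛑 qs n) (γe (𝛑 qs n)) q := by
        simp only [mass, ih, mul_sum]
      rw [outStateProb_snoc, outProb_snoc, hmass, predAt_snoc_succ, mul_assoc, mass_mul_Fupd hπ,
        mul_sum]
      simp only [ih, mul_assoc]

def trajExpect (n : ℕ) (f : (Fin n → X) → (Fin n → M) → ℝ) : ℝ :=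
  ∑ xs, ∑ qs, law P γe γc π0 n xs qs * f xs qs

theorem trajExpect_add {n : ℕ} (f g : (Fin n → X) → (Fin n → M) → ℝ) :
    trajExpect P γe γc π0 n (fun xs qs ↦ f xs qs + g xs qs) =
      trajExpect P γe γc π0 n f + trajExpect P γe γc π0 n g := by
  simp only [trajExpect, mul_add, sum_add_distrib]

theorem sum_outProb_mul {n : ℕ} (g : (Fin n → M) → ℝ) :
    ∑ qs, outProb P γe γc π0 n qs * g qs = trajExpect P γe γc π0 n (fun _ qs ↦ g qs) := by
  simp only [outProb, trajExpect, sum_mul]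
  exact sum_comm

theorem trajExpect_succ {n : ℕ} (f : (Fin (n + 1) → X) → (Fin (n + 1) → M) → ℝ) :
    trajExpect P γe γc π0 (n + 1) f =
      trajExpect P γe γc π0 n fun xs qs ↦
        ∑ x, stageKernel P γe γc π0 xs qs x * f (Fin.snoc xs x) (Fin.snoc qs (γe (𝛑 qs n) x)) := by
  have hfiber : ∀ qs : Fin n → M,
      ∑ q, ∑ x ∈ univ.filter (γe (𝛑 qs n) · = q), ∑ xs,
          law P γe γc π0 n xs qs * stageKernel P γe γc π0 xs qs x *
            f (Fin.snoc xs x) (Fin.snoc qs q) =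
        ∑ x, ∑ xs, law P γe γc π0 n xs qs * stageKernel P γe γc π0 xs qs x *
            f (Fin.snoc xs x) (Fin.snoc qs (γe (𝛑 qs n) x)) := fun qs ↦ by
    rw [← sum_fiberwise univ (γe (𝛑 qs n))]
    refine sum_congr rfl fun q _ ↦ sum_congr rfl fun x hx ↦ ?_
    rw [(mem_filter.1 hx).2]
  calc trajExpect P γe γc π0 (n + 1) f
      = ∑ qs, ∑ q, ∑ xs', law P γe γc π0 (n + 1) xs' (Fin.snoc qs q) *
          f xs' (Fin.snoc qs q) := by
        rw [trajExpect, sum_comm, sum_pi_fin_succ, sum_comm]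
    _ = ∑ qs, ∑ x, ∑ xs, law P γe γc π0 n xs qs * stageKernel P γe γc π0 xs qs x *
          f (Fin.snoc xs x) (Fin.snoc qs (γe (𝛑 qs n) x)) := by
        simp only [sum_law_snoc_mul, hfiber]
    _ = _ := by
        simp only [trajExpect, mul_sum, ← mul_assoc]
        exact (sum_congr rfl fun _ _ ↦ sum_comm).trans sum_comm

theorem trajExpect_stageKernel_mul (hP : ∀ x u x', 0 ≤ P x u x') (hπ0 : ∀ x, 0 ≤ π0 x) {n : ℕ}
    (φ : (Fin n → M) → X → ℝ) :
    trajExpect P γe γc π0 n (fun xs qs ↦ ∑ x, stageKernel P γe γc π0 xs qs x * φ qs x) =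
      trajExpect P γe γc π0 n (fun _ qs ↦ ∑ x, 𝛑 qs n x * φ qs x) := by
  rw [← sum_outProb_mul, trajExpect, sum_comm]
  refine sum_congr rfl fun qs _ ↦ ?_
  calc ∑ xs, law P γe γc π0 n xs qs * ∑ x, stageKernel P γe γc π0 xs qs x * φ qs x
      = ∑ x, outStateProb P γe γc π0 n qs x * φ qs x := by
        simp only [outStateProb, mul_sum, sum_mul, mul_assoc]
        exact sum_comm
    _ = _ := by
        simp only [outStateProb_eq_outProb_mul_predAt P γe γc π0 hP hπ0, mul_sum, mul_assoc]

theorem trajExpect_sum_cost_eq_sum_ctilde (hP : ∀ x u, IsPmf (P x u)) (hπ0 : IsPmf π0)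
    (c : X → U → ℝ) (n : ℕ) :
    trajExpect P γe γc π0 n
        (fun xs qs ↦ ∑ k : Fin n, c (xs k) (γc (𝛑 qs k) (γe (𝛑 qs k)) (qs k))) =
      trajExpect P γe γc π0 n
        (fun _ qs ↦ ∑ k : Fin n, ctilde c (𝛑 qs k) (γe (𝛑 qs k)) (γc (𝛑 qs k))) := by
  induction n with
  | zero => simp [trajExpect]
  | succ n ih =>
    rw [trajExpect_succ, trajExpect_succ]
    simp only [Fin.sum_univ_castSucc, Fin.snoc_castSucc, Fin.snoc_last, Fin.val_castSucc,
      Fin.val_last, predAt_snoc_of_le, Fin.is_le', le_refl]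
    simp only [mul_add, sum_add_distrib, ← sum_mul, sum_stageKernel P γe γc π0 hP hπ0, one_mul]
    rw [trajExpect_add, trajExpect_add, ih,
      trajExpect_stageKernel_mul P γe γc π0 (fun x u ↦ (hP x u).1) hπ0.1]
    rfl

end Trajectory

theorem cost_equivalence_general
    [Fintype X] [Fintype M] [DecidableEq M]
    (P : X → U → X → ℝ) (hP : ∀ x u, IsPmf (P x u)) (c : X → U → ℝ)
    (γe : (X → ℝ) → (X → M)) (γc : (X → ℝ) → ((X → M) → M → U))
    (π0 : X → ℝ) (hπ0 : IsPmf π0)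
    (N : ℕ) :
    (∑ xs : Fin N → X, ∑ qs : Fin N → M,
        law P γe γc π0 N xs qs *
          ∑ k : Fin N,
            c (xs k)
              (γc (predAt P γe γc π0 qs (k : ℕ)) (γe (predAt P γe γc π0 qs (k : ℕ)))
                (qs k)))
      = ∑ qs : Fin N → M,
          outProb P γe γc π0 N qs *
            ∑ k : Fin N,
              ctilde c (predAt P γe γc π0 qs (k : ℕ))
                (γe (predAt P γe γc π0 qs (k : ℕ)))
                (γc (predAt P γe γc π0 qs (k : ℕ))) := by
  rw [sum_outProb_mul]
  exact trajExpect_sum_cost_eq_sum_ctilde P γe γc π0 hP hπ0 c N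

/-- Cost equivalence for controlled-predictor policies: for every finite
horizon `N ≥ 1`, every initial pmf `π_0` and every controlled-predictor policy,
`E[Σ_{k=0}^{N-1} c(x_k, u_k)] = E[Σ_{k=0}^{N-1} c̃(π_k, Q_k, η_k)]`,
where `u_k = η_k(Q_k, q_k)`, expectations are w.r.t. the trajectory law, `π_k` is the
recursively defined predictor, and `c̃(π,Q,η) := Σ_x π(x) c(x, η(Q, Q(x)))`. -/
theorem cost_equivalence
    [Fintype X] [Fintype U] [Fintype M]
    [Nonempty X] [Nonempty U] [Nonempty M] [DecidableEq X] [DecidableEq M]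
    (P : X → U → X → ℝ) (hP : ∀ x u, IsPmf (P x u)) (c : X → U → ℝ)
    (γe : (X → ℝ) → (X → M)) (γc : (X → ℝ) → ((X → M) → M → U))
    (π0 : X → ℝ) (hπ0 : IsPmf π0)
    (N : ℕ) (hN : 1 ≤ N) :
    (∑ xs : Fin N → X, ∑ qs : Fin N → M,
        law P γe γc π0 N xs qs *
          ∑ k : Fin N,
            c (xs k)
              (γc (predAt P γe γc π0 qs (k : ℕ)) (γe (predAt P γe γc π0 qs (k : ℕ)))
                (qs k)))
      = ∑ qs : Fin N → M,
          outProb P γe γc π0 N qs *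
            ∑ k : Fin N,
              ctilde c (predAt P γe γc π0 qs (k : ℕ))
                (γe (predAt P γe γc π0 qs (k : ℕ)))
                (γc (predAt P γe γc π0 qs (k : ℕ))) :=
  cost_equivalence_general P hP c γe γc π0 hπ0 N
end
end

section
/- Weak Feller property of the predictor-MDP kernel: for every continuous bounded function f : P(𝕏) → ℝ (with P(𝕏) carrying its topology as a subset of ℝ^𝕏), every Q ∈ 𝒬 and η ∈ ℋ, the map π ↦ Σ_{q ∈ ℳ : π(Q⁻¹(q)) > 0} f(F(π,Q,η,q)) · π(Q⁻¹(q)) is continuous on P(𝕏); consequently, since 𝒬 and ℋ are finite (discrete), the map (π,Q,η) ↦ Σ_{q : π(Q⁻¹(q))>0} f(F(π,Q,η,q)) π(Q⁻¹(q)) is continuous and bounded on P(𝕏) × 𝒬 × ℋ. -/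
open Finset

noncomputable section

variable {X U M : Type}

/-- The expected-value map `(π,Q,η) ↦ Σ_{q : π(Q⁻¹(q)) > 0} f(F(π,Q,η,q)) π(Q⁻¹(q))`,
i.e. the integral of `f` against the predictor-MDP transition kernel. -/
def kernelInt [Fintype X] [Fintype M] [DecidableEq M] (P : X → U → X → ℝ)
    (f : (X → ℝ) → ℝ) (π : X → ℝ) (Q : X → M) (η : (X → M) → M → U) : ℝ :=
  ∑ q ∈ Finset.univ.filter (fun q => 0 < mass π Q q),
    f (Fupd P π Q η q) * mass π Q q

lemma sum_mass [Fintype X] [Fintype M] [DecidableEq M] (π : X → ℝ) (Q : X → M) :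
    ∑ q, mass π Q q = ∑ x, π x :=
  Finset.sum_fiberwise _ _ _

lemma mass_continuous [Fintype X] [DecidableEq M] (Q : X → M) (q : M) :
    Continuous fun π : X → ℝ => mass π Q q :=
  continuous_finset_sum _ fun x _ => continuous_apply x

lemma mass_nonneg [Fintype X] [DecidableEq M] {π : X → ℝ} (hπ : ∀ x, 0 ≤ π x)
    (Q : X → M) (q : M) : 0 ≤ mass π Q q :=
  Finset.sum_nonneg fun x _ => hπ x

lemma Fupd_isPmf [Fintype X] [DecidableEq M] {P : X → U → X → ℝ}
    (hP : ∀ x u, IsPmf (P x u)) {π : X → ℝ} (hπ : IsPmf π)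
    {Q : X → M} (η : (X → M) → M → U) {q : M} (hm : 0 < mass π Q q) :
    IsPmf (Fupd P π Q η q) := by
  constructor
  · intro x'
    exact mul_nonneg (inv_nonneg.2 hm.le)
      (Finset.sum_nonneg fun x _ => mul_nonneg ((hP x _).1 _) (hπ.1 x))
  · have : ∑ x', Fupd P π Q η q x' = (mass π Q q)⁻¹ * mass π Q q := by
      unfold Fupd
      rw [← Finset.mul_sum, Finset.sum_comm]
      congr 1
      unfold mass
      refine Finset.sum_congr rfl fun x _ => ?_
      rw [← Finset.sum_mul, (hP x _).2, one_mul]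
    rw [this, inv_mul_cancel₀ hm.ne']

lemma Fupd_continuousOn [Fintype X] [DecidableEq M] (P : X → U → X → ℝ)
    (Q : X → M) (η : (X → M) → M → U) (q : M) :
    ContinuousOn (fun π => Fupd P π Q η q) {π : X → ℝ | 0 < mass π Q q} := by
  apply continuousOn_pi.2
  intro x'
  exact ((mass_continuous Q q).continuousOn.inv₀ fun π hπ => ne_of_gt hπ).mul
    (Continuous.continuousOn (continuous_finset_sum _ fun x _ =>
      continuous_const.mul (continuous_apply x)))

lemma term_continuousOn [Fintype X] [DecidableEq M] {P : X → U → X → ℝ}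
    (hP : ∀ x u, IsPmf (P x u)) {f : (X → ℝ) → ℝ}
    (hf : ContinuousOn f {π : X → ℝ | IsPmf π})
    {C : ℝ} (hfb : ∀ π : X → ℝ, IsPmf π → |f π| ≤ C)
    (Q : X → M) (η : (X → M) → M → U) (q : M) :
    ContinuousOn
      (fun π => if 0 < mass π Q q then f (Fupd P π Q η q) * mass π Q q else 0)
      {π : X → ℝ | IsPmf π} := by
  intro π₀ hπ₀
  by_cases hm : 0 < mass π₀ Q q
  · have hU : IsOpen {π : X → ℝ | 0 < mass π Q q} :=
      isOpen_lt continuous_const (mass_continuous Q q)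
    rw [← continuousWithinAt_inter (hU.mem_nhds hm)]
    refine ContinuousWithinAt.congr
      (f := fun π => f (Fupd P π Q η q) * mass π Q q) ?_
      (fun π hπ => if_pos hπ.2) (if_pos hm)
    refine ContinuousWithinAt.mul ?_ (mass_continuous Q q).continuousWithinAt
    refine ContinuousWithinAt.comp (hf _ (Fupd_isPmf hP hπ₀ η hm))
      (((Fupd_continuousOn P Q η q) π₀ hm).mono Set.inter_subset_right) ?_
    exact fun π hπ => Fupd_isPmf hP hπ.1 η hπ.2
  · have hm0 : mass π₀ Q q = 0 := le_antisymm (not_lt.1 hm) (mass_nonneg hπ₀.1 Q q)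
    have hC : 0 ≤ C := le_trans (abs_nonneg _) (hfb _ hπ₀)
    unfold ContinuousWithinAt
    rw [show (fun π => if 0 < mass π Q q then f (Fupd P π Q η q) * mass π Q q else 0) π₀
        = 0 from if_neg hm]
    apply squeeze_zero_norm' (a := fun π => C * mass π Q q)
    · filter_upwards [self_mem_nhdsWithin] with π hπ
      by_cases h : 0 < mass π Q q
      · rw [if_pos h, Real.norm_eq_abs, abs_mul, abs_of_pos h]
        exact mul_le_mul_of_nonneg_right (hfb _ (Fupd_isPmf hP hπ η h)) h.le
      · rw [if_neg h]
        simpa using mul_nonneg hC (mass_nonneg hπ.1 Q q)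
    · have h1 : Continuous fun π : X → ℝ => C * mass π Q q :=
        continuous_const.mul (mass_continuous Q q)
      have := (h1.tendsto π₀).mono_left
        (nhdsWithin_le_nhds (s := {π : X → ℝ | IsPmf π}))
      rwa [hm0, mul_zero] at this

/-- Weak Feller property of the predictor-MDP kernel: for every
continuous bounded `f : P(𝕏) → ℝ` (with `P(𝕏)` the probability simplex in `ℝ^𝕏`),
every `Q ∈ 𝒬` and `η ∈ ℋ`, the map
`π ↦ Σ_{q : π(Q⁻¹(q)) > 0} f(F(π,Q,η,q)) · π(Q⁻¹(q))` is continuous on `P(𝕏)`;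
consequently, since `𝒬` and `ℋ` are finite (discrete), the map
`(π,Q,η) ↦ Σ_{q : π(Q⁻¹(q))>0} f(F(π,Q,η,q)) π(Q⁻¹(q))` is continuous and bounded
on `P(𝕏) × 𝒬 × ℋ`. -/
theorem weak_feller_predictor_kernel
    [Fintype X] [Fintype U] [Fintype M]
    [Nonempty X] [Nonempty U] [Nonempty M] [DecidableEq X] [DecidableEq M]
    [TopologicalSpace M] [DiscreteTopology M] [TopologicalSpace U] [DiscreteTopology U]
    (P : X → U → X → ℝ) (hP : ∀ x u, IsPmf (P x u))
    (f : (X → ℝ) → ℝ)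
    (hf : ContinuousOn f {π : X → ℝ | IsPmf π})
    (hfb : ∃ C : ℝ, ∀ π : X → ℝ, IsPmf π → |f π| ≤ C) :
    (∀ (Q : X → M) (η : (X → M) → M → U),
        ContinuousOn (fun π => kernelInt P f π Q η) {π : X → ℝ | IsPmf π})
    ∧ ContinuousOn
        (fun p : (X → ℝ) × ((X → M) × ((X → M) → M → U)) =>
          kernelInt P f p.1 p.2.1 p.2.2)
        ({π : X → ℝ | IsPmf π} ×ˢ (Set.univ : Set ((X → M) × ((X → M) → M → U))))
    ∧ ∃ C : ℝ, ∀ π : X → ℝ, IsPmf π →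
        ∀ (Q : X → M) (η : (X → M) → M → U), |kernelInt P f π Q η| ≤ C := by
  obtain ⟨C, hC⟩ := hfb
  have hker : ∀ (π : X → ℝ) (Q : X → M) (η : (X → M) → M → U),
      kernelInt P f π Q η =
        ∑ q, if 0 < mass π Q q then f (Fupd P π Q η q) * mass π Q q else 0 :=
    fun π Q η => Finset.sum_filter _ _
  have part1 : ∀ (Q : X → M) (η : (X → M) → M → U),
      ContinuousOn (fun π => kernelInt P f π Q η) {π : X → ℝ | IsPmf π} := by
    intro Q η
    intro π₀ hπ₀
    have h := fun q => term_continuousOn hP hf hC Q η q π₀ hπ₀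
    simp only [hker]
    exact tendsto_finset_sum _ fun q _ => h q
  refine ⟨part1, ?_, ?_⟩
  · intro p hp
    rw [ContinuousWithinAt, nhdsWithin_prod_eq, nhdsWithin_univ]
    have h2 : ∀ᶠ r : (X → ℝ) × ((X → M) × ((X → M) → M → U)) in
        (nhdsWithin p.1 {π : X → ℝ | IsPmf π} ×ˢ nhds p.2), r.2 = p.2 := by
      have hs : {p.2} ∈ nhds p.2 := (isOpen_discrete {p.2}).mem_nhds rfl
      filter_upwards [Filter.prod_mem_prod Filter.univ_mem hs] with r hr
      exact hr.2
    refine Filter.Tendsto.congr' ?_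
      (Filter.Tendsto.comp (part1 p.2.1 p.2.2 p.1 hp.1) Filter.tendsto_fst)
    filter_upwards [h2] with r hr
    rw [hr]
    rfl
  · refine ⟨max C 0, fun π hπ Q η => ?_⟩
    calc |kernelInt P f π Q η|
        ≤ ∑ q ∈ Finset.univ.filter (fun q => 0 < mass π Q q),
            |f (Fupd P π Q η q) * mass π Q q| := Finset.abs_sum_le_sum_abs _ _
      _ ≤ ∑ q ∈ Finset.univ.filter (fun q => 0 < mass π Q q),
            max C 0 * mass π Q q := by
          refine Finset.sum_le_sum fun q hq => ?_
          have hq' : 0 < mass π Q q := (Finset.mem_filter.1 hq).2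
          rw [abs_mul, abs_of_pos hq']
          exact mul_le_mul_of_nonneg_right
            (le_trans (hC _ (Fupd_isPmf hP hπ η hq')) (le_max_left _ _)) hq'.le
      _ ≤ ∑ q, max C 0 * mass π Q q :=
          Finset.sum_le_sum_of_subset_of_nonneg (Finset.filter_subset _ _)
            fun q _ _ => mul_nonneg (le_max_right _ _) (mass_nonneg hπ.1 Q q)
      _ = max C 0 := by rw [← Finset.mul_sum, sum_mass, hπ.2, mul_one]


end
end
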